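/- arXiv:2206.05166 — 3 statements merged into one kernel-verified Lean document; each statement's English description precedes it below -/
import Mathlib

section
/- Under the hypotheses of the certificate value identity — X_r = Σ_{ℓ=1}^L α_ℓ u w(r_ℓ)^H with ‖u‖₂ = 1 and nonzero α_ℓ, X_c = Σ_{q=1}^Q α'_q v w(c_q)^H with ‖v‖₂ = 1 and nonzero α'_q, y = B_r(X_r) + B_c(X_c), and q ∈ ℂ^D satisfying f_r(r_ℓ) = sign(α_ℓ)·u for all ℓ and f_c(c_q) = sign(α'_q)·v for all q — one has ⟨q, y⟩_ℝ ≥ ‖X_r‖_{A_r} + ‖X_c‖_{A_c}, where ‖·‖_{A_r} and ‖·‖_{A_c} are the atomic norms in ℂ^{K×D} and ℂ^{K'×D} respectively. -/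
open scoped BigOperators
open Matrix

noncomputable section

/-- Index set of size `D = Nr * M * P` with `M = 2N+1`, ordered as `p ⊗ d ⊗ b`. -/
abbrev Dix (Nr P N : ℕ) := Fin P × Fin (2 * N + 1) × Fin Nr

/-- Spatial steering vector `b(β) ∈ ℂ^{Nr}`, `b(β)[k] = exp(-2πi k β)`. -/
def bVec (Nr : ℕ) (β : ℝ) : Fin Nr → ℂ :=
  fun k => Complex.exp (-(2 * Real.pi * Complex.I * ((k : ℕ) : ℂ) * (β : ℂ)))

/-- Delay steering vector `d(τ) ∈ ℂ^{M}`, `M = 2N+1`, entries `exp(-2πi n τ)`, `n = -N,…,N`. -/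
def dVec (N : ℕ) (τ : ℝ) : Fin (2 * N + 1) → ℂ :=
  fun n => Complex.exp (-(2 * Real.pi * Complex.I * ((((n : ℕ) : ℤ) - (N : ℤ) : ℤ) : ℂ) * (τ : ℂ)))

/-- Doppler steering vector `p(ν) ∈ ℂ^{P}`, `p(ν)[p] = exp(-2πi p ν)`. -/
def pVec (P : ℕ) (ν : ℝ) : Fin P → ℂ :=
  fun p => Complex.exp (-(2 * Real.pi * Complex.I * ((p : ℕ) : ℂ) * (ν : ℂ)))

/-- `w(r) = p(ν) ⊗ d(τ) ⊗ b(β) ∈ ℂ^D`, for `r = (τ, ν, β)`. -/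
def wVec (Nr P N : ℕ) (r : ℝ × ℝ × ℝ) : Dix Nr P N → ℂ :=
  fun j => pVec P r.2.1 j.1 * dVec N r.1 j.2.1 * bVec Nr r.2.2 j.2.2

/-- The parameter cube `[0,1]^3`. -/
def cube : Set (ℝ × ℝ × ℝ) := Set.Icc ((0, 0, 0) : ℝ × ℝ × ℝ) (1, 1, 1)

/-- Euclidean (ℓ₂) norm of a complex vector. -/
def norm2 {ι : Type*} [Fintype ι] (u : ι → ℂ) : ℝ := Real.sqrt (∑ i, ‖u i‖ ^ 2)

/-- Atom `u w^H ∈ ℂ^{K×D}`. -/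
def atom {ι : Type*} (K : ℕ) (u : Fin K → ℂ) (w : ι → ℂ) : Matrix (Fin K) ι ℂ :=
  fun k j => u k * starRingEnd ℂ (w j)

/-- `sign(c) = c / |c|`. -/
def csign (c : ℂ) : ℂ := c / ((‖c‖ : ℝ) : ℂ)

/-- Atomic norm of `X ∈ ℂ^{K×D}` with respect to the atoms `u w(r)^H`. -/
def atomicNorm (Nr P N K : ℕ) (X : Matrix (Fin K) (Dix Nr P N) ℂ) : ℝ :=
  sInf { t | ∃ (L : ℕ) (α : Fin L → ℂ) (r : Fin L → ℝ × ℝ × ℝ) (u : Fin K → ℂ),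
    (∀ ℓ, r ℓ ∈ cube) ∧ norm2 u = 1 ∧
    X = ∑ ℓ, α ℓ • atom K u (wVec Nr P N (r ℓ)) ∧
    t = ∑ ℓ, ‖α ℓ‖ }

/-- Dual atomic norm `‖Y‖*_A = sup { |Tr(A^H Y)| : A an atom }`. -/
def dualAtomicNorm (Nr P N K : ℕ) (Y : Matrix (Fin K) (Dix Nr P N) ℂ) : ℝ :=
  sSup { t | ∃ (rr : ℝ × ℝ × ℝ) (u : Fin K → ℂ), rr ∈ cube ∧ norm2 u = 1 ∧
    t = ‖Matrix.trace ((atom K u (wVec Nr P N rr))ᴴ * Y)‖ }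

/-- `X` admits at least one atomic decomposition. -/
def hasAtomicDecomp (Nr P N K : ℕ) (X : Matrix (Fin K) (Dix Nr P N) ℂ) : Prop :=
  ∃ (L : ℕ) (α : Fin L → ℂ) (r : Fin L → ℝ × ℝ × ℝ) (u : Fin K → ℂ),
    (∀ ℓ, r ℓ ∈ cube) ∧ norm2 u = 1 ∧
    X = ∑ ℓ, α ℓ • atom K u (wVec Nr P N (r ℓ))

/-- The linear operator `B(X)[j] = Tr(G_j X)`. -/
def Bop {ι : Type*} [Fintype ι] {K : ℕ} (G : ι → Matrix ι (Fin K) ℂ)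
    (X : Matrix (Fin K) ι ℂ) : ι → ℂ := fun j => Matrix.trace (G j * X)

/-- The adjoint operator `B*(q) = Σ_j q[j] G_j^H`. -/
def Bstar {ι : Type*} [Fintype ι] {K : ℕ} (G : ι → Matrix ι (Fin K) ℂ)
    (q : ι → ℂ) : Matrix (Fin K) ι ℂ := ∑ j, q j • (G j)ᴴ

/-- Real inner product `⟨q, y⟩_ℝ = Re(y^H q)`. -/
def rInner {ι : Type*} [Fintype ι] (q y : ι → ℂ) : ℝ :=
  (∑ j, starRingEnd ℂ (y j) * q j).re


/-! The certificate `q` pairs with `y` to exactly the total weight `Σ|α_ℓ| + Σ|α'_q|`: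
`⟨q, B(X)⟩_ℝ = Re Tr(X^H B*(q))`, and for `X = Σ α_ℓ u w_ℓ^H` this trace is
`Σ conj(α_ℓ) u^H f(r_ℓ) = Σ conj(α_ℓ) sign(α_ℓ) ‖u‖² = Σ |α_ℓ|`. The given decompositions
are admissible in the infima defining the atomic norms, so those norms are at most these weights. -/

lemma conj_mul_csign (a : ℂ) : starRingEnd ℂ a * csign a = ‖a‖ := by
  rcases eq_or_ne a 0 with rfl | ha
  · simp [csign]
  · rw [csign, ← mul_div_assoc, Complex.conj_mul', sq, mul_div_assoc,
      div_self (Complex.ofReal_ne_zero.mpr (norm_ne_zero_iff.mpr ha)), mul_one]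

lemma atom_eq_vecMulVec {ι : Type*} (K : ℕ) (u : Fin K → ℂ) (w : ι → ℂ) :
    atom K u w = vecMulVec u (star w) := rfl

section Certificate

variable {ι : Type*} [Fintype ι] {K : ℕ}

lemma sum_conj_Bop_mul_eq_trace (G : ι → Matrix ι (Fin K) ℂ) (X : Matrix (Fin K) ι ℂ)
    (q : ι → ℂ) :
    ∑ j, starRingEnd ℂ (Bop G X j) * q j = trace (Xᴴ * Bstar G q) := by
  simp only [Bop, Bstar, Matrix.mul_sum, Matrix.mul_smul, trace_sum, trace_smul, smul_eq_mul]
  refine Finset.sum_congr rfl fun j _ => ?_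
  rw [mul_comm, ← conjTranspose_mul, trace_conjTranspose, starRingEnd_apply]

lemma rInner_Bop_add_Bop {K' : ℕ} (G : ι → Matrix ι (Fin K) ℂ) (A : ι → Matrix ι (Fin K') ℂ)
    (X : Matrix (Fin K) ι ℂ) (X' : Matrix (Fin K') ι ℂ) (q : ι → ℂ) :
    rInner q (fun j => Bop G X j + Bop A X' j) =
      (trace (Xᴴ * Bstar G q)).re + (trace (X'ᴴ * Bstar A q)).re := by
  simp only [rInner, map_add, add_mul, Finset.sum_add_distrib, Complex.add_re,
    sum_conj_Bop_mul_eq_trace]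

lemma trace_atom_conjTranspose_mul (u : Fin K → ℂ) (w : ι → ℂ) (Y : Matrix (Fin K) ι ℂ) :
    trace ((atom K u w)ᴴ * Y) = star u ⬝ᵥ (Y *ᵥ w) := by
  rw [atom_eq_vecMulVec, conjTranspose_vecMulVec, star_star, trace_mul_comm, mul_vecMulVec,
    trace_vecMulVec, dotProduct_comm]

lemma star_dotProduct_self_of_norm2_eq_one {u : ι → ℂ}
    (hu : norm2 u = 1) : star u ⬝ᵥ u = 1 := by
  have hsum : ∑ i, ‖u i‖ ^ 2 = 1 := by
    rwa [norm2, Real.sqrt_eq_one] at hu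
  simp only [dotProduct, Pi.star_apply, ← starRingEnd_apply, Complex.conj_mul']
  exact_mod_cast hsum

lemma trace_conjTranspose_mul_eq_sum_norm {L : ℕ}
    (α : Fin L → ℂ) (w : Fin L → ι → ℂ) {u : Fin K → ℂ} (hu : norm2 u = 1)
    {Y : Matrix (Fin K) ι ℂ} (hY : ∀ ℓ, Y *ᵥ w ℓ = csign (α ℓ) • u) :
    trace ((∑ ℓ, α ℓ • atom K u (w ℓ))ᴴ * Y) = ∑ ℓ, ‖α ℓ‖ := by
  simp only [conjTranspose_sum, conjTranspose_smul, Matrix.sum_mul, smul_mul, trace_sum,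
    trace_smul, trace_atom_conjTranspose_mul, hY, dotProduct_smul,
    star_dotProduct_self_of_norm2_eq_one hu, smul_eq_mul, mul_one, Complex.ofReal_sum]
  exact Finset.sum_congr rfl fun ℓ _ => conj_mul_csign (α ℓ)

end Certificate

lemma atomicNorm_le_sum_norm {Nr P N K L : ℕ} (α : Fin L → ℂ) {r : Fin L → ℝ × ℝ × ℝ}
    {u : Fin K → ℂ} (hr : ∀ ℓ, r ℓ ∈ cube) (hu : norm2 u = 1) :
    atomicNorm Nr P N K (∑ ℓ, α ℓ • atom K u (wVec Nr P N (r ℓ))) ≤ ∑ ℓ, ‖α ℓ‖ := by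
  refine csInf_le ⟨0, ?_⟩ ⟨L, α, r, u, hr, hu, rfl, rfl⟩
  rintro t ⟨L', α', r', u', -, -, -, rfl⟩
  exact Finset.sum_nonneg fun ℓ _ => norm_nonneg _

theorem dual_objective_lower_bound_general (Nr P N K K' : ℕ)
    (G : Dix Nr P N → Matrix (Dix Nr P N) (Fin K) ℂ)
    (A : Dix Nr P N → Matrix (Dix Nr P N) (Fin K') ℂ)
    (L : ℕ) (α : Fin L → ℂ) (r : Fin L → ℝ × ℝ × ℝ) (u : Fin K → ℂ)
    (hr : ∀ ℓ, r ℓ ∈ cube) (hu : norm2 u = 1)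
    (Q : ℕ) (α' : Fin Q → ℂ) (c : Fin Q → ℝ × ℝ × ℝ) (v : Fin K' → ℂ)
    (hc : ∀ qq, c qq ∈ cube) (hv : norm2 v = 1)
    (Xr : Matrix (Fin K) (Dix Nr P N) ℂ)
    (hXr : Xr = ∑ ℓ, α ℓ • atom K u (wVec Nr P N (r ℓ)))
    (Xc : Matrix (Fin K') (Dix Nr P N) ℂ)
    (hXc : Xc = ∑ qq, α' qq • atom K' v (wVec Nr P N (c qq)))
    (y : Dix Nr P N → ℂ)
    (hy : y = fun j => Bop G Xr j + Bop A Xc j)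
    (q : Dix Nr P N → ℂ)
    (hfr : ∀ ℓ, Bstar G q *ᵥ wVec Nr P N (r ℓ) = csign (α ℓ) • u)
    (hfc : ∀ qq, Bstar A q *ᵥ wVec Nr P N (c qq) = csign (α' qq) • v) :
    rInner q y ≥ atomicNorm Nr P N K Xr + atomicNorm Nr P N K' Xc := by
  have hval : rInner q y = (∑ ℓ, ‖α ℓ‖) + ∑ qq, ‖α' qq‖ := by
    rw [hy, rInner_Bop_add_Bop, hXr, hXc,
      trace_conjTranspose_mul_eq_sum_norm α _ hu hfr,
      trace_conjTranspose_mul_eq_sum_norm α' _ hv hfc, Complex.ofReal_re, Complex.ofReal_re]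
  rw [ge_iff_le, hval, hXr, hXc]
  exact add_le_add (atomicNorm_le_sum_norm α hr hu) (atomicNorm_le_sum_norm α' hc hv)

/-- **Lower bound on the dual objective.**  Under the certificate value identity
hypotheses, `⟨q, y⟩_ℝ ≥ ‖X_r‖_{A_r} + ‖X_c‖_{A_c}`. -/
theorem dual_objective_lower_bound (Nr P N K K' : ℕ)
    (hNr : 0 < Nr) (hP : 0 < P) (hK : 0 < K) (hK' : 0 < K')
    (G : Dix Nr P N → Matrix (Dix Nr P N) (Fin K) ℂ)
    (A : Dix Nr P N → Matrix (Dix Nr P N) (Fin K') ℂ)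
    (L : ℕ) (α : Fin L → ℂ) (r : Fin L → ℝ × ℝ × ℝ) (u : Fin K → ℂ)
    (hα : ∀ ℓ, α ℓ ≠ 0) (hr : ∀ ℓ, r ℓ ∈ cube) (hu : norm2 u = 1)
    (Q : ℕ) (α' : Fin Q → ℂ) (c : Fin Q → ℝ × ℝ × ℝ) (v : Fin K' → ℂ)
    (hα' : ∀ qq, α' qq ≠ 0) (hc : ∀ qq, c qq ∈ cube) (hv : norm2 v = 1)
    (Xr : Matrix (Fin K) (Dix Nr P N) ℂ)
    (hXr : Xr = ∑ ℓ, α ℓ • atom K u (wVec Nr P N (r ℓ)))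
    (Xc : Matrix (Fin K') (Dix Nr P N) ℂ)
    (hXc : Xc = ∑ qq, α' qq • atom K' v (wVec Nr P N (c qq)))
    (y : Dix Nr P N → ℂ)
    (hy : y = fun j => Bop G Xr j + Bop A Xc j)
    (q : Dix Nr P N → ℂ)
    (hfr : ∀ ℓ, Bstar G q *ᵥ wVec Nr P N (r ℓ) = csign (α ℓ) • u)
    (hfc : ∀ qq, Bstar A q *ᵥ wVec Nr P N (c qq) = csign (α' qq) • v) :
    rInner q y ≥ atomicNorm Nr P N K Xr + atomicNorm Nr P N K' Xc :=
  dual_objective_lower_bound_general Nr P N K K' G A L α r u hr hu Q α' c v hc hv Xr hXr Xc hXc y hy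
    q hfr hfc
end
end

section
/- Suppose X = Σ_{ℓ=1}^L α_ℓ u w(r_ℓ)^H with α_ℓ ∈ ℂ \ {0}, ‖u‖₂ = 1, and there exists q ∈ ℂ^D such that the dual polynomial f(r) = B*(q) w(r) satisfies f(r_ℓ) = sign(α_ℓ)·u for every ℓ and ‖f(r)‖₂ ≤ 1 for every r ∈ [0,1]^3. Then the atomic norm of X is exactly achieved by this decomposition: ‖X‖_A = Σ_{ℓ=1}^L |α_ℓ|. -/
open scoped BigOperators
open Matrix

noncomputable section

/-!
Weak duality. With `Q = B*(q)`, the functional `Y ↦ Re tr(Qᴴ Y)` takes on an atom `u w(s)ᴴ` the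
value `Re ⟨u, Q w(s)⟩`, which by Cauchy–Schwarz and `‖Q w(s)‖₂ ≤ 1` is at most `1` in modulus; hence
every decomposition of `X` costs at least `Re tr(Qᴴ X)`. The interpolation `Q w(r_ℓ) = sign(α_ℓ) u`
makes the given decomposition cost exactly that much.
-/

section EuclideanNorm

variable {ι : Type*} [Fintype ι]

lemma norm2_eq_norm_toLp (u : ι → ℂ) : norm2 u = ‖(WithLp.toLp 2 u : EuclideanSpace ℂ ι)‖ := by
  rw [EuclideanSpace.norm_eq]
  rfl

lemma norm_dotProduct_star_le (u v : ι → ℂ) : ‖u ⬝ᵥ star v‖ ≤ norm2 u * norm2 v := by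
  rw [norm2_eq_norm_toLp, norm2_eq_norm_toLp, mul_comm, ← EuclideanSpace.inner_toLp_toLp]
  exact norm_inner_le_norm _ _

lemma dotProduct_star_self_of_norm2_eq_one {u : ι → ℂ} (hu : norm2 u = 1) :
    u ⬝ᵥ star u = 1 := by
  rw [← EuclideanSpace.inner_toLp_toLp, inner_self_eq_norm_sq_to_K, ← norm2_eq_norm_toLp, hu]
  norm_num

end EuclideanNorm

lemma mul_star_csign (a : ℂ) : a * star (csign a) = ‖a‖ := by
  rcases eq_or_ne a 0 with rfl | ha
  · simp
  have : ((‖a‖ : ℝ) : ℂ) ≠ 0 := by simpa using ha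
  rw [Complex.star_def, csign, map_div₀, Complex.conj_ofReal, mul_div_assoc', Complex.mul_conj,
    Complex.normSq_eq_norm_sq]
  field_simp
  norm_cast

section Pairing

variable {K : ℕ} {ι : Type*} [Fintype ι] (Q : Matrix (Fin K) ι ℂ)

lemma trace_conjTranspose_mul_atom (u : Fin K → ℂ) (w : ι → ℂ) :
    (Qᴴ * atom K u w).trace = u ⬝ᵥ star (Q *ᵥ w) := by
  have : atom K u w = vecMulVec u (star w) := rfl
  rw [this, trace_mul_comm, vecMulVec_mul, trace_vecMulVec, star_mulVec]

lemma trace_conjTranspose_mul_sum_smul_atom {L : ℕ} (β : Fin L → ℂ) (u : Fin K → ℂ)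
    (w : Fin L → ι → ℂ) :
    (Qᴴ * ∑ m, β m • atom K u (w m)).trace = ∑ m, β m * (u ⬝ᵥ star (Q *ᵥ w m)) := by
  simp only [Matrix.mul_sum, Matrix.mul_smul, trace_sum, trace_smul, smul_eq_mul,
    trace_conjTranspose_mul_atom]

lemma re_trace_conjTranspose_mul_le {L : ℕ} (β : Fin L → ℂ) {u : Fin K → ℂ} (hu : norm2 u = 1)
    {w : Fin L → ι → ℂ} (hQw : ∀ m, norm2 (Q *ᵥ w m) ≤ 1) :
    ((Qᴴ * ∑ m, β m • atom K u (w m)).trace).re ≤ ∑ m, ‖β m‖ := by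
  rw [trace_conjTranspose_mul_sum_smul_atom]
  have hcoef (m : Fin L) : ‖u ⬝ᵥ star (Q *ᵥ w m)‖ ≤ 1 := by
    calc ‖u ⬝ᵥ star (Q *ᵥ w m)‖ ≤ norm2 u * norm2 (Q *ᵥ w m) := norm_dotProduct_star_le _ _
      _ ≤ 1 := by rw [hu, one_mul]; exact hQw m
  calc (∑ m, β m * (u ⬝ᵥ star (Q *ᵥ w m))).re
      ≤ ‖∑ m, β m * (u ⬝ᵥ star (Q *ᵥ w m))‖ := Complex.re_le_norm _
    _ ≤ ∑ m, ‖β m‖ * ‖u ⬝ᵥ star (Q *ᵥ w m)‖ :=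
      (norm_sum_le _ _).trans_eq (by simp only [norm_mul])
    _ ≤ ∑ m, ‖β m‖ := by
      gcongr with m
      exact mul_le_of_le_one_right (norm_nonneg _) (hcoef m)

lemma trace_conjTranspose_mul_eq_of_interpolates {L : ℕ} (α : Fin L → ℂ) {u : Fin K → ℂ}
    (hu : norm2 u = 1) {w : Fin L → ι → ℂ} (hQw : ∀ ℓ, Q *ᵥ w ℓ = csign (α ℓ) • u) :
    (Qᴴ * ∑ ℓ, α ℓ • atom K u (w ℓ)).trace = ((∑ ℓ, ‖α ℓ‖ : ℝ) : ℂ) := by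
  rw [trace_conjTranspose_mul_sum_smul_atom, Complex.ofReal_sum]
  refine Finset.sum_congr rfl fun ℓ _ => ?_
  rw [hQw, star_smul, dotProduct_smul, dotProduct_star_self_of_norm2_eq_one hu, smul_eq_mul,
    mul_one, mul_star_csign]

end Pairing

theorem atomic_norm_attained_general (Nr P N K : ℕ)
    (G : Dix Nr P N → Matrix (Dix Nr P N) (Fin K) ℂ)
    (L : ℕ) (α : Fin L → ℂ) (r : Fin L → ℝ × ℝ × ℝ) (u : Fin K → ℂ)
    (hr : ∀ ℓ, r ℓ ∈ cube) (hu : norm2 u = 1)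
    (X : Matrix (Fin K) (Dix Nr P N) ℂ)
    (hX : X = ∑ ℓ, α ℓ • atom K u (wVec Nr P N (r ℓ)))
    (hcert : ∃ q : Dix Nr P N → ℂ,
      (∀ ℓ, Bstar G q *ᵥ wVec Nr P N (r ℓ) = csign (α ℓ) • u) ∧
      (∀ rr ∈ cube, norm2 (Bstar G q *ᵥ wVec Nr P N rr) ≤ 1)) :
    atomicNorm Nr P N K X = ∑ ℓ, ‖α ℓ‖ := by
  obtain ⟨q, hinterp, hbound⟩ := hcert
  have hpair : ((Bstar G q)ᴴ * X).trace = ((∑ ℓ, ‖α ℓ‖ : ℝ) : ℂ) := by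
    rw [hX, trace_conjTranspose_mul_eq_of_interpolates _ α hu hinterp]
  refine IsLeast.csInf_eq ⟨⟨L, α, r, u, hr, hu, hX, rfl⟩, ?_⟩
  rintro _ ⟨L', β, s, v, hs, hv, hXv, rfl⟩
  calc ∑ ℓ, ‖α ℓ‖ = (((Bstar G q)ᴴ * X).trace).re := by rw [hpair, Complex.ofReal_re]
    _ ≤ ∑ m, ‖β m‖ := by
      rw [hXv]
      exact re_trace_conjTranspose_mul_le _ β hv fun m => hbound _ (hs m)

/-- **Atomic norm attained by a certified decomposition.**
If `X = Σ_ℓ α_ℓ u w(r_ℓ)^H` with `‖u‖₂ = 1` and there is `q` whose dual polynomial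
`f(r) = B*(q) w(r)` interpolates the signs (`f(r_ℓ) = sign(α_ℓ) u`) and satisfies
`‖f(r)‖₂ ≤ 1` on all of `[0,1]^3`, then `‖X‖_A = Σ_ℓ |α_ℓ|`. -/
theorem atomic_norm_attained (Nr P N K : ℕ) (hNr : 0 < Nr) (hP : 0 < P) (hK : 0 < K)
    (G : Dix Nr P N → Matrix (Dix Nr P N) (Fin K) ℂ)
    (L : ℕ) (α : Fin L → ℂ) (r : Fin L → ℝ × ℝ × ℝ) (u : Fin K → ℂ)
    (hα : ∀ ℓ, α ℓ ≠ 0) (hr : ∀ ℓ, r ℓ ∈ cube) (hu : norm2 u = 1)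
    (X : Matrix (Fin K) (Dix Nr P N) ℂ)
    (hX : X = ∑ ℓ, α ℓ • atom K u (wVec Nr P N (r ℓ)))
    (hcert : ∃ q : Dix Nr P N → ℂ,
      (∀ ℓ, Bstar G q *ᵥ wVec Nr P N (r ℓ) = csign (α ℓ) • u) ∧
      (∀ rr ∈ cube, norm2 (Bstar G q *ᵥ wVec Nr P N rr) ≤ 1)) :
    atomicNorm Nr P N K X = ∑ ℓ, ‖α ℓ‖ :=
  atomic_norm_attained_general Nr P N K G L α r u hr hu X hX hcert
end
end

section
/- (Bounded-real sufficiency for the SDP constraints) Let Q ∈ ℂ^{D×D} and R ∈ ℂ^{K×D}, D = N_r·M·P, be such that (i) the block matrix [[Q, R^H], [R, I_K]] is positive semidefinite, and (ii) Tr(Θ_𝐧 Q) = δ_𝐧 for every multi-index 𝐧 = (n₁, n₂, n₃) with |n₁| ≤ P−1, |n₂| ≤ M−1, |n₃| ≤ N_r−1, where Θ_𝐧 = Θ_{n₁}^{(P)} ⊗ Θ_{n₂}^{(M)} ⊗ Θ_{n₃}^{(N_r)} and δ_𝐧 = 1 iff 𝐧 = (0,0,0). Then the vector-valued trigonometric polynomial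 r ↦ R w(r) ∈ ℂ^K satisfies ‖R w(r)‖₂ ≤ 1 for every r ∈ [0,1]^3. -/
/-!
For a steering vector `w = w(r)`, the product `conj (w j') * w j` depends only on the lag
`j - j'`, so the quadratic form `wᴴ Q w` is the sum over lags `n` of `e(n) · Tr(Θ_n Q)` for
explicit phases `e(n)` with `e(0) = 1`; the trace constraints collapse this sum to `1`.
The Schur complement of the identity block of `[[Q, Rᴴ], [R, I]]` gives `Rᴴ R ≤ Q`, hence
`‖R w‖² ≤ wᴴ Q w = 1`.
-/

open scoped BigOperators ComplexOrder
open Matrix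

noncomputable section

/-- Elementary Toeplitz matrix `Θ_n^{(d)}`: ones on the `n`-th diagonal (`(k,l)` entry is
`1` if `k − l = n`, else `0`). -/
def theta (d : ℕ) (n : ℤ) : Matrix (Fin d) (Fin d) ℂ :=
  fun k l => if ((k : ℕ) : ℤ) - ((l : ℕ) : ℤ) = n then 1 else 0

/-- `Θ_𝐧 = Θ_{n₁}^{(P)} ⊗ Θ_{n₂}^{(M)} ⊗ Θ_{n₃}^{(N_r)}` on the product index set. -/
def thetaKron (Nr P N : ℕ) (n₁ n₂ n₃ : ℤ) :
    Matrix (Dix Nr P N) (Dix Nr P N) ℂ :=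
  fun j j' => theta P n₁ j.1 j'.1 * theta (2 * N + 1) n₂ j.2.1 j'.2.1 * theta Nr n₃ j.2.2 j'.2.2

theorem Matrix.PosSemidef.star_mulVec_dotProduct_le {m n R : Type*} [Fintype m] [Fintype n]
    [DecidableEq n] [CommRing R] [PartialOrder R] [StarRing R] [StarOrderedRing R]
    [NoZeroDivisors R] {Q : Matrix m m R} {B : Matrix n m R}
    (h : (fromBlocks Q Bᴴ B 1).PosSemidef) (x : m → R) :
    star (B *ᵥ x) ⬝ᵥ (B *ᵥ x) ≤ star x ⬝ᵥ (Q *ᵥ x) := by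
  let : Invertible (1 : Matrix n n R) := invertibleOne
  have hschur := (PosDef.fromBlocks₂₂ Q Bᴴ PosDef.one).1 (by rwa [conjTranspose_conjTranspose])
  have := hschur.dotProduct_mulVec_nonneg x
  rwa [inv_one, Matrix.mul_one, conjTranspose_conjTranspose, sub_mulVec, dotProduct_sub,
    sub_nonneg, ← mulVec_mulVec, dotProduct_mulVec, ← star_mulVec] at this

theorem dotProduct_mulVec_eq_sum_mul_trace {ι α R : Type*} [Fintype ι] [DecidableEq α]
    [CommSemiring R] [Star R] (Q : Matrix ι ι R) (w : ι → R) (lag : ι → ι → α) (e : α → R)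
    (Θ : α → Matrix ι ι R) (S : Finset α) (hS : ∀ j j', lag j j' ∈ S)
    (hΘ : ∀ n j j', Θ n j j' = if lag j j' = n then 1 else 0)
    (he : ∀ j j', star (w j') * w j = e (lag j j')) :
    star w ⬝ᵥ (Q *ᵥ w) = ∑ n ∈ S, e n * trace (Θ n * Q) := by
  have hdiag : ∀ j j', ∑ n ∈ S, e n * (Θ n j j' * Q j' j) = star (w j') * Q j' j * w j := by
    intro j j'
    simp only [hΘ, ite_mul, one_mul, zero_mul, mul_ite, mul_zero, Finset.sum_ite_eq,
      if_pos (hS j j'), ← he]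
    ring
  calc star w ⬝ᵥ (Q *ᵥ w) = ∑ j' : ι, ∑ j : ι, star (w j') * Q j' j * w j := by
        simp only [dotProduct, mulVec, Pi.star_apply, Finset.mul_sum, mul_assoc]
    _ = ∑ j : ι, ∑ j' : ι, ∑ n ∈ S, e n * (Θ n j j' * Q j' j) := by
        rw [Finset.sum_comm]
        simp only [hdiag]
    _ = ∑ n ∈ S, ∑ j : ι, ∑ j' : ι, e n * (Θ n j j' * Q j' j) := Finset.sum_comm_cycle
    _ = ∑ n ∈ S, e n * trace (Θ n * Q) := by
        simp only [trace, diag, mul_apply, Finset.mul_sum]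

theorem norm2_le_one_iff {ι : Type*} [Fintype ι] (u : ι → ℂ) :
    norm2 u ≤ 1 ↔ star u ⬝ᵥ u ≤ 1 := by
  have hsum : star u ⬝ᵥ u = ((∑ i, ‖u i‖ ^ 2 : ℝ) : ℂ) := by
    push_cast
    exact Finset.sum_congr rfl fun i _ => Complex.conj_mul' (u i)
  rw [norm2, Real.sqrt_le_one, hsum]
  exact_mod_cast Iff.rfl

def expPhase (n : ℤ) (x : ℝ) : ℂ := Complex.exp (-(2 * Real.pi * Complex.I * n * x))

theorem expPhase_zero (x : ℝ) : expPhase 0 x = 1 := by simp [expPhase]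

theorem star_expPhase_mul_expPhase (m n : ℤ) (x : ℝ) :
    star (expPhase m x) * expPhase n x = expPhase (n - m) x := by
  simp only [expPhase, Complex.star_def, ← Complex.exp_conj, map_neg, map_mul, Complex.conj_I,
    Complex.conj_ofReal, map_ofNat, map_intCast, ← Complex.exp_add]
  congr 1
  push_cast
  ring

theorem pVec_apply (P : ℕ) (ν : ℝ) (k : Fin P) : pVec P ν k = expPhase (k : ℕ) ν := by
  simp [pVec, expPhase]

theorem dVec_apply (N : ℕ) (τ : ℝ) (k : Fin (2 * N + 1)) :
    dVec N τ k = expPhase ((k : ℕ) - N) τ := rfl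

theorem bVec_apply (Nr : ℕ) (β : ℝ) (k : Fin Nr) : bVec Nr β k = expPhase (k : ℕ) β := by
  simp [bVec, expPhase]

def lag {Nr P N : ℕ} (j j' : Dix Nr P N) : ℤ × ℤ × ℤ :=
  (((j.1 : ℕ) : ℤ) - ((j'.1 : ℕ) : ℤ), ((j.2.1 : ℕ) : ℤ) - ((j'.2.1 : ℕ) : ℤ),
    ((j.2.2 : ℕ) : ℤ) - ((j'.2.2 : ℕ) : ℤ))

theorem thetaKron_apply {Nr P N : ℕ} (n : ℤ × ℤ × ℤ) (j j' : Dix Nr P N) :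
    thetaKron Nr P N n.1 n.2.1 n.2.2 j j' = if lag j j' = n then 1 else 0 := by
  simp only [thetaKron, theta, lag, Prod.ext_iff]
  split_ifs <;> simp_all

theorem abs_lag_le {Nr P N : ℕ} (j j' : Dix Nr P N) :
    |(lag j j').1| ≤ (P : ℤ) - 1 ∧ |(lag j j').2.1| ≤ (2 * N + 1 : ℤ) - 1 ∧
      |(lag j j').2.2| ≤ (Nr : ℤ) - 1 := by
  have := j.1.isLt; have := j'.1.isLt; have := j.2.1.isLt; have := j'.2.1.isLt
  have := j.2.2.isLt; have := j'.2.2.isLt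
  simp only [lag, abs_le]
  omega

def wPhase (r : ℝ × ℝ × ℝ) (n : ℤ × ℤ × ℤ) : ℂ :=
  expPhase n.1 r.2.1 * expPhase n.2.1 r.1 * expPhase n.2.2 r.2.2

theorem wPhase_zero (r : ℝ × ℝ × ℝ) : wPhase r 0 = 1 := by
  simp [wPhase, expPhase_zero]

theorem star_wVec_mul_wVec (Nr P N : ℕ) (r : ℝ × ℝ × ℝ) (j j' : Dix Nr P N) :
    star (wVec Nr P N r j') * wVec Nr P N r j = wPhase r (lag j j') := by
  calc _ = (star (pVec P r.2.1 j'.1) * pVec P r.2.1 j.1) *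
        (star (dVec N r.1 j'.2.1) * dVec N r.1 j.2.1) *
        (star (bVec Nr r.2.2 j'.2.2) * bVec Nr r.2.2 j.2.2) := by
        simp only [wVec, star_mul']
        ring
    _ = _ := by
        simp only [pVec_apply, dVec_apply, bVec_apply, star_expPhase_mul_expPhase, wPhase, lag]
        ring_nf

theorem bounded_real_sufficiency_general (Nr P N K : ℕ)
    (Q : Matrix (Dix Nr P N) (Dix Nr P N) ℂ)
    (R : Matrix (Fin K) (Dix Nr P N) ℂ)
    (hPSD : (Matrix.fromBlocks Q Rᴴ R (1 : Matrix (Fin K) (Fin K) ℂ)).PosSemidef)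
    (hQ : ∀ n₁ n₂ n₃ : ℤ, |n₁| ≤ (P : ℤ) - 1 → |n₂| ≤ (2 * N + 1 : ℤ) - 1 →
      |n₃| ≤ (Nr : ℤ) - 1 →
      Matrix.trace (thetaKron Nr P N n₁ n₂ n₃ * Q)
        = if n₁ = 0 ∧ n₂ = 0 ∧ n₃ = 0 then 1 else 0) :
    ∀ rr ∈ cube, norm2 (R *ᵥ wVec Nr P N rr) ≤ 1 := by
  intro rr _
  set S := Finset.univ.image fun jj : Dix Nr P N × Dix Nr P N => lag jj.1 jj.2
  have htrace : ∀ n ∈ S,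
      trace (thetaKron Nr P N n.1 n.2.1 n.2.2 * Q) = if n = 0 then 1 else 0 := by
    intro n hn
    obtain ⟨⟨j, j'⟩, -, rfl⟩ := Finset.mem_image.1 hn
    obtain ⟨h₁, h₂, h₃⟩ := abs_lag_le j j'
    simp only [hQ _ _ _ h₁ h₂ h₃, Prod.ext_iff, Prod.fst_zero, Prod.snd_zero]
  have hquad : star (wVec Nr P N rr) ⬝ᵥ (Q *ᵥ wVec Nr P N rr) = if 0 ∈ S then 1 else 0 := by
    rw [dotProduct_mulVec_eq_sum_mul_trace Q _ lag (wPhase rr) _ S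
      (fun j j' => Finset.mem_image_of_mem _ (Finset.mem_univ (j, j'))) thetaKron_apply
      (star_wVec_mul_wVec Nr P N rr), Finset.sum_congr rfl fun n hn => by rw [htrace n hn]]
    simp [Finset.sum_ite_eq', wPhase_zero]
  rw [norm2_le_one_iff]
  refine (hPSD.star_mulVec_dotProduct_le _).trans ?_
  rw [hquad]
  split_ifs <;> norm_num

/-- **Bounded-real sufficiency for the SDP constraints.**  If the block matrix
`[[Q, R^H], [R, I_K]]` is positive semidefinite and `Tr(Θ_𝐧 Q) = δ_𝐧` for all
multi-indices `𝐧` in range, then `‖R w(r)‖₂ ≤ 1` for every `r ∈ [0,1]^3`. -/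
theorem bounded_real_sufficiency (Nr P N K : ℕ) (hNr : 0 < Nr) (hP : 0 < P) (hK : 0 < K)
    (Q : Matrix (Dix Nr P N) (Dix Nr P N) ℂ)
    (R : Matrix (Fin K) (Dix Nr P N) ℂ)
    (hPSD : (Matrix.fromBlocks Q Rᴴ R (1 : Matrix (Fin K) (Fin K) ℂ)).PosSemidef)
    (hQ : ∀ n₁ n₂ n₃ : ℤ, |n₁| ≤ (P : ℤ) - 1 → |n₂| ≤ (2 * N + 1 : ℤ) - 1 →
      |n₃| ≤ (Nr : ℤ) - 1 →
      Matrix.trace (thetaKron Nr P N n₁ n₂ n₃ * Q)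
        = if n₁ = 0 ∧ n₂ = 0 ∧ n₃ = 0 then 1 else 0) :
    ∀ rr ∈ cube, norm2 (R *ᵥ wVec Nr P N rr) ≤ 1 :=
  bounded_real_sufficiency_general Nr P N K Q R hPSD hQ
end
end
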